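/- arXiv:1911.11036 — 4 statements merged into one kernel-verified Lean document; each statement's English description precedes it below -/
import Mathlib

section
/- Let A be a complex n×n positive semidefinite matrix. Then the trace of the real part of A is at least the trace norm (sum of singular values) of the imaginary part of A: tr(Re A) ≥ ‖Im A‖₁. -/
open Matrix ComplexOrder

/-- The trace norm (sum of singular values) of a matrix over `𝕜 = ℝ` or `ℂ`. -/
noncomputable def traceNorm {n : Type*} [Fintype n] [DecidableEq n] {𝕜 : Type*} [RCLike 𝕜]
    (M : Matrix n n 𝕜) : ℝ :=
  RCLike.re (Matrix.trace
    (((Matrix.isHermitian_conjTranspose_mul_self M).eigenvectorUnitary : Matrix n n 𝕜) *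
      diagonal ((↑) ∘ (√·) ∘ (Matrix.isHermitian_conjTranspose_mul_self M).eigenvalues) *
      (star (Matrix.isHermitian_conjTranspose_mul_self M).eigenvectorUnitary : Matrix n n 𝕜)))

/-- The entrywise real part of a complex matrix. -/
def rePart {n : Type*} (A : Matrix n n ℂ) : Matrix n n ℝ := fun i j => (A i j).re

/-- The entrywise imaginary part of a complex matrix. -/
def imPart {n : Type*} (A : Matrix n n ℂ) : Matrix n n ℝ := fun i j => (A i j).im

/-!
Write `A = R + iB` with `R = Re A` real symmetric and `B = Im A` real antisymmetric, so that
`H = iB` is Hermitian. Positivity of `A` and of `Aᵀ = conj A = R - iB` gives `-R ≤ H ≤ R`.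
In an eigenbasis of `H` this says that the diagonal entries of `R` dominate the `|λᵢ|`, hence
`tr R ≥ ∑ |λᵢ| = ‖H‖₁`, and `‖H‖₁ = ‖B‖₁` because `Hᴴ H = Bᵀ B`.
-/

open Polynomial

section TraceNorm

variable {n : Type*} [Fintype n] [DecidableEq n] {𝕜 : Type*} [RCLike 𝕜]

lemma Matrix.IsHermitian.sum_comp_eigenvalues_eq_of_charpoly_eq {A : Matrix n n 𝕜}
    (hA : A.IsHermitian) {g : n → ℝ} (h : A.charpoly = ∏ i, (X - C (g i : 𝕜)))
    (f : ℝ → ℝ) :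
    ∑ i, f (hA.eigenvalues i) = ∑ i, f (g i) := by
  have hroots := hA.roots_charpoly_eq_eigenvalues
  rw [h, roots_prod _ _ (Finset.prod_ne_zero_iff.mpr fun i _ => X_sub_C_ne_zero _)] at hroots
  have := congrArg (fun s => (s.map (f ∘ RCLike.re)).sum) hroots
  simpa [Multiset.map_map, Function.comp_def] using this.symm

lemma traceNorm_eq_sum_sqrt_eigenvalues {M X : Matrix n n 𝕜} (hX : X.IsHermitian)
    (h : Mᴴ * M = X) : traceNorm M = ∑ i, √(hX.eigenvalues i) := by
  subst h
  rw [traceNorm, trace_mul_cycle, Unitary.coe_star_mul_self, Matrix.one_mul, trace_diagonal]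
  simp

lemma traceNorm_map_algebraMap (B : Matrix n n ℝ) :
    traceNorm (B.map (algebraMap ℝ 𝕜)) = traceNorm B := by
  have hBB := isHermitian_conjTranspose_mul_self B
  have hmap : (B.map (algebraMap ℝ 𝕜))ᴴ * B.map (algebraMap ℝ 𝕜) =
      (Bᴴ * B).map (algebraMap ℝ 𝕜) := by
    rw [Matrix.map_mul, conjTranspose_map _ fun x => by simp]
  have hBB' : ((Bᴴ * B).map (algebraMap ℝ 𝕜)).IsHermitian :=
    hmap ▸ isHermitian_conjTranspose_mul_self _
  rw [traceNorm_eq_sum_sqrt_eigenvalues hBB' hmap,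
    traceNorm_eq_sum_sqrt_eigenvalues hBB rfl]
  refine hBB'.sum_comp_eigenvalues_eq_of_charpoly_eq ?_ _
  rw [charpoly_map, hBB.charpoly_eq, Polynomial.map_prod]
  simp

lemma traceNorm_smul_of_norm_eq_one (M : Matrix n n 𝕜) {c : 𝕜} (hc : ‖c‖ = 1) :
    traceNorm (c • M) = traceNorm M := by
  have h : (c • M)ᴴ * (c • M) = Mᴴ * M := by
    rw [conjTranspose_smul, smul_mul_smul_comm, RCLike.star_def, RCLike.conj_mul, hc]
    simp
  have hMM := isHermitian_conjTranspose_mul_self M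
  rw [traceNorm_eq_sum_sqrt_eigenvalues hMM h, traceNorm_eq_sum_sqrt_eigenvalues hMM rfl]

lemma Matrix.IsHermitian.traceNorm_eq_sum_abs_eigenvalues {M : Matrix n n 𝕜}
    (hM : M.IsHermitian) : traceNorm M = ∑ i, |hM.eigenvalues i| := by
  have hsq : Mᴴ * M = M ^ 2 := by rw [hM.eq, sq]
  have hcharpoly : (M ^ 2).charpoly = ∏ i, (X - C ((hM.eigenvalues i ^ 2 : ℝ) : 𝕜)) := by
    rw [← cfc_pow_id (R := ℝ) M 2 hM]
    exact hM.charpoly_cfc_eq _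
  rw [traceNorm_eq_sum_sqrt_eigenvalues (hM.pow 2) hsq,
    (hM.pow 2).sum_comp_eigenvalues_eq_of_charpoly_eq hcharpoly]
  simp only [Real.sqrt_sq_eq_abs]

lemma Matrix.IsHermitian.traceNorm_le_re_trace {H R : Matrix n n 𝕜} (hH : H.IsHermitian)
    (hadd : (R + H).PosSemidef) (hsub : (R - H).PosSemidef) :
    traceNorm H ≤ RCLike.re R.trace := by
  set U : Matrix n n 𝕜 := ↑hH.eigenvectorUnitary
  have hdiag : star U * H * U = diagonal (RCLike.ofReal ∘ hH.eigenvalues) := by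
    simpa [Unitary.conjStarAlgAut_apply] using hH.conjStarAlgAut_star_eigenvectorUnitary
  have habs (i : n) : |hH.eigenvalues i| ≤ RCLike.re ((star U * R * U) i i) := by
    have hnonneg {S : Matrix n n 𝕜} (hS : S.PosSemidef) : 0 ≤ RCLike.re ((Uᴴ * S * U) i i) :=
      (RCLike.nonneg_iff.mp (hS.conjTranspose_mul_mul_same U).diag_nonneg).1
    have h₁ := hnonneg hadd
    have h₂ := hnonneg hsub
    simp only [← star_eq_conjTranspose, Matrix.mul_add, Matrix.add_mul, Matrix.mul_sub,
      Matrix.sub_mul, hdiag, add_apply, sub_apply, diagonal_apply_eq, Function.comp_apply,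
      map_add, map_sub, RCLike.ofReal_re] at h₁ h₂
    exact abs_le.mpr ⟨by linarith, by linarith⟩
  calc traceNorm H = ∑ i, |hH.eigenvalues i| := hH.traceNorm_eq_sum_abs_eigenvalues
    _ ≤ ∑ i, RCLike.re ((star U * R * U) i i) := Finset.sum_le_sum fun i _ => habs i
    _ = RCLike.re R.trace := by
      rw [← map_sum]
      change RCLike.re (star U * R * U).trace = _
      rw [trace_mul_cycle, Unitary.mul_star_self_of_mem hH.eigenvectorUnitary.2, Matrix.one_mul]

end TraceNorm

section ReIm

variable {n : Type*}

lemma map_rePart_add_I_smul_map_imPart (A : Matrix n n ℂ) :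
    (rePart A).map (algebraMap ℝ ℂ) + Complex.I • (imPart A).map (algebraMap ℝ ℂ) =
      A := by
  ext i j
  simp [rePart, imPart, mul_comm Complex.I, Complex.re_add_im]

lemma Matrix.IsHermitian.map_rePart_sub_I_smul_map_imPart {A : Matrix n n ℂ}
    (hA : A.IsHermitian) :
    (rePart A).map (algebraMap ℝ ℂ) - Complex.I • (imPart A).map (algebraMap ℝ ℂ) =
      Aᵀ := by
  ext i j
  rw [transpose_apply, ← hA.apply j i]
  apply Complex.ext <;> simp [rePart, imPart]

lemma Matrix.IsHermitian.isHermitian_I_smul_map_imPart {A : Matrix n n ℂ}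
    (hA : A.IsHermitian) : (Complex.I • (imPart A).map (algebraMap ℝ ℂ)).IsHermitian := by
  ext i j
  simp [imPart, ← hA.apply i j]

end ReIm

/-- Belavkin–Grishanin inequality: for `A ⪰ 0`, `tr(Re A) ≥ ‖Im A‖₁`. -/
theorem belavkin_grishanin {n : Type*} [Fintype n] [DecidableEq n]
    (A : Matrix n n ℂ) (hA : A.PosSemidef) :
    traceNorm (imPart A) ≤ Matrix.trace (rePart A) := by
  have hH := hA.1.isHermitian_I_smul_map_imPart
  calc traceNorm (imPart A)
      = traceNorm (Complex.I • (imPart A).map (algebraMap ℝ ℂ)) := by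
        rw [traceNorm_smul_of_norm_eq_one _ Complex.norm_I, traceNorm_map_algebraMap]
    _ ≤ RCLike.re ((rePart A).map (algebraMap ℝ ℂ)).trace := by
        refine hH.traceNorm_le_re_trace ?_ ?_
        · rwa [map_rePart_add_I_smul_map_imPart]
        · rw [hA.1.map_rePart_sub_I_smul_map_imPart]
          exact hA.transpose
    _ = trace (rePart A) := by simp [Matrix.trace]
end

section
/- Let ρ be a density matrix, M a POVM on finite Ω with estimator β̌ : Ω → ℝ^q, and define the mean β = ∑ₓ β̌(x) tr(ρ M(x)) (assumed local unbiasedness), the influence operators X_s = ∑ₓ (β̌_s(x) − β_s) M(x), the error matrix Σ = ∑ₓ (β̌(x)−β)(β̌(x)−β)ᵀ tr(ρ M(x)), and V(X)_{st} = tr(ρ (X_s X_t + X_t X_s)/2). Then Σ ⪰ V(X). -/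
/-! For a real vector `a` put `g x = a ⬝ᵥ (β̌ x - β)` and `A = ∑ₛ aₛ Xₛ = ∑ₓ g x • M x`. Then
`aᵀ Σ a = re tr (ρ ∑ₓ (g x)² M x)` and `aᵀ V a = re tr (ρ A²)`, while `∑ₓ M x = 1` gives
`∑ₓ (g x)² M x - A² = ∑ₓ (g x - A) M x (g x - A) ⪰ 0`. -/

open Matrix ComplexOrder

section StarOrderedAlgebra

variable {Ω R A : Type*} [Fintype Ω]

theorem sum_sub_mul_mul_sub_eq_sum_sq_smul_sub [CommRing R] [Ring A] [Algebra R A]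
    (M : Ω → A) (hsum : ∑ x, M x = 1) (g : Ω → R) :
    ∑ x, (g x • 1 - ∑ y, g y • M y) * M x * (g x • 1 - ∑ y, g y • M y)
      = ∑ x, g x ^ 2 • M x - (∑ x, g x • M x) * (∑ x, g x • M x) := by
  set B := ∑ y, g y • M y
  have expand : ∀ x, (g x • 1 - B) * M x * (g x • 1 - B)
      = g x ^ 2 • M x - (g x • M x) * B - B * (g x • M x) + B * M x * B := by
    intro x
    simp only [sub_mul, mul_sub, smul_mul_assoc, mul_smul_comm, one_mul, mul_one, smul_smul,
      smul_sub, sq, mul_assoc]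
    abel
  simp only [expand, Finset.sum_add_distrib, Finset.sum_sub_distrib, ← Finset.sum_mul,
    ← Finset.mul_sum, hsum, mul_one]
  abel

theorem sum_smul_mul_self_le_sum_sq_smul [Ring A] [StarRing A] [PartialOrder A]
    [StarOrderedRing A] [Algebra ℝ A] [StarModule ℝ A] {M : Ω → A} (hM : ∀ x, 0 ≤ M x) (hsum : ∑ x, M x = 1)
    (g : Ω → ℝ) :
    (∑ x, g x • M x) * (∑ x, g x • M x) ≤ ∑ x, g x ^ 2 • M x := by
  have hB : IsSelfAdjoint (∑ x, g x • M x) :=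
    isSelfAdjoint_sum _ fun x _ => (IsSelfAdjoint.all (g x)).smul (IsSelfAdjoint.of_nonneg (hM x))
  rw [← sub_nonneg, ← sum_sub_mul_mul_sub_eq_sum_sq_smul_sub M hsum g]
  refine Finset.sum_nonneg fun x _ => ?_
  have hc : IsSelfAdjoint (g x • (1 : A) - ∑ y, g y • M y) :=
    ((IsSelfAdjoint.all (g x)).smul (IsSelfAdjoint.one A)).sub hB
  simpa only [hc.star_eq] using star_left_conjugate_nonneg (hM x) (g x • 1 - ∑ y, g y • M y)

end StarOrderedAlgebra

section QuadraticForm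

variable {Ω q : Type*} [Fintype Ω] [Fintype q]

theorem dotProduct_mulVec_eq_sum_sq_mul (S : Matrix q q ℝ) (f : Ω → q → ℝ) (w : Ω → ℝ)
    (hS : ∀ s t, S s t = ∑ x, f x s * f x t * w x) (a : q → ℝ) :
    a ⬝ᵥ S *ᵥ a = ∑ x, (a ⬝ᵥ f x) ^ 2 * w x := by
  simp only [dotProduct, mulVec, hS, sq, Finset.sum_mul, Finset.mul_sum]
  calc _ = ∑ s, ∑ x, ∑ t, a s * (f x s * f x t * w x * a t) :=
        Finset.sum_congr rfl fun s _ => Finset.sum_comm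
    _ = _ := by
        rw [Finset.sum_comm]
        exact Finset.sum_congr rfl fun x _ => Finset.sum_congr rfl fun s _ =>
          Finset.sum_congr rfl fun t _ => by ring

theorem dotProduct_mulVec_eq_map_sum_smul_mul_self {A : Type*} [Ring A] [Algebra ℝ A]
    (L : A →ₗ[ℝ] ℝ) (X : q → A) (V : Matrix q q ℝ)
    (hV : ∀ s t, V s t = L (X s * X t + X t * X s) / 2) (a : q → ℝ) :
    a ⬝ᵥ V *ᵥ a = L ((∑ s, a s • X s) * (∑ s, a s • X s)) := by
  have hsymm : ∑ s, ∑ t, a s * a t * L (X t * X s) = ∑ s, ∑ t, a s * a t * L (X s * X t) := by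
    rw [Finset.sum_comm]
    exact Finset.sum_congr rfl fun s _ => Finset.sum_congr rfl fun t _ => by ring
  calc a ⬝ᵥ V *ᵥ a
      = ((∑ s, ∑ t, a s * a t * L (X s * X t)) + ∑ s, ∑ t, a s * a t * L (X t * X s)) / 2 := by
        simp only [dotProduct, mulVec, hV, map_add, Finset.mul_sum, ← Finset.sum_add_distrib,
          Finset.sum_div]
        exact Finset.sum_congr rfl fun s _ => Finset.sum_congr rfl fun t _ => by ring
    _ = L ((∑ s, a s • X s) * (∑ s, a s • X s)) := by
        simp only [hsymm, Finset.sum_mul_sum, smul_mul_smul_comm, map_sum, map_smul, smul_eq_mul]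
        ring

end QuadraticForm

section Trace

variable {n : Type*} [Fintype n]

open scoped MatrixOrder

theorem Matrix.PosSemidef.trace_mul_nonneg {𝕜 : Type*} [RCLike 𝕜] {A B : Matrix n n 𝕜}
    (hA : A.PosSemidef) (hB : B.PosSemidef) : 0 ≤ (A * B).trace := by
  classical
  obtain ⟨C, rfl⟩ := CStarAlgebra.nonneg_iff_eq_star_mul_self.mp hB.nonneg
  rw [← mul_assoc, trace_mul_cycle]
  exact (hA.mul_mul_conjTranspose_same C).trace_nonneg

theorem Matrix.PosSemidef.re_trace_mul_le_re_trace_mul {ρ P Q : Matrix n n ℂ}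
    (hρ : ρ.PosSemidef) (hPQ : P ≤ Q) : (ρ * P).trace.re ≤ (ρ * Q).trace.re := by
  rw [← sub_nonneg, ← Complex.sub_re, ← trace_sub, ← mul_sub]
  exact (Complex.le_def.mp (hρ.trace_mul_nonneg (le_iff.mp hPQ))).1

end Trace

theorem error_matrix_ge_sym_covariance_general {Ω n q : Type*}
    [Fintype Ω] [Fintype n] [DecidableEq n] [Fintype q]
    (ρ : Matrix n n ℂ) (hρ : ρ.PosSemidef)
    (M : Ω → Matrix n n ℂ) (hpos : ∀ x, (M x).PosSemidef) (hsum : ∑ x, M x = 1)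
    (betaHat : Ω → q → ℝ) (beta : q → ℝ)
    (X : q → Matrix n n ℂ)
    (hX : ∀ s, X s = ∑ x, ((betaHat x s - beta s : ℝ) : ℂ) • M x)
    (Sig : Matrix q q ℝ)
    (hSig : ∀ s t, Sig s t = ∑ x, (betaHat x s - beta s) * (betaHat x t - beta t)
        * (ρ * M x).trace.re)
    (V : Matrix q q ℝ)
    (hV : ∀ s t, V s t = ((ρ * ((X s * X t + X t * X s) : Matrix n n ℂ)).trace.re) / 2) :
    (Sig - V).PosSemidef := by
  let L : Matrix n n ℂ →ₗ[ℝ] ℝ :=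
    Complex.reLm ∘ₗ traceLinearMap n ℝ ℂ ∘ₗ LinearMap.mulLeft ℝ ρ
  refine posSemidef_iff_dotProduct_mulVec.2 ⟨?_, fun a => ?_⟩
  · ext s t
    simp only [conjTranspose_apply, star_trivial, Matrix.sub_apply, hSig, hV]
    rw [add_comm (X t * X s)]
    congr 1
    exact Finset.sum_congr rfl fun x _ => by ring
  set g : Ω → ℝ := fun x => a ⬝ᵥ (betaHat x - beta)
  have hcombination : ∑ s, a s • X s = ∑ x, g x • M x := by
    simp only [hX, Complex.coe_smul, Finset.smul_sum, smul_smul]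
    rw [Finset.sum_comm]
    simp only [← Finset.sum_smul, g, dotProduct, Pi.sub_apply]
  rw [star_trivial, sub_mulVec, dotProduct_sub, sub_nonneg,
    dotProduct_mulVec_eq_sum_sq_mul Sig (fun x => betaHat x - beta) _ hSig,
    dotProduct_mulVec_eq_map_sum_smul_mul_self L X V hV, hcombination]
  open scoped MatrixOrder in
  calc L ((∑ x, g x • M x) * ∑ x, g x • M x) ≤ L (∑ x, g x ^ 2 • M x) :=
        hρ.re_trace_mul_le_re_trace_mul
          (sum_smul_mul_self_le_sum_sq_smul (fun x => (hpos x).nonneg) hsum g)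
    _ = ∑ x, g x ^ 2 * (ρ * M x).trace.re := by simp only [map_sum, map_smul, smul_eq_mul]; rfl

/-- Holevo's matrix CRB with the symmetrized covariance: `Sig ⪰ V(X)` for the
influence operators of a locally unbiased measurement. -/
theorem error_matrix_ge_sym_covariance {Ω n q : Type*}
    [Fintype Ω] [Fintype n] [DecidableEq n] [Fintype q] [DecidableEq q]
    (ρ : Matrix n n ℂ) (hρ : ρ.PosSemidef) (hρtr : ρ.trace = 1)
    (M : Ω → Matrix n n ℂ) (hpos : ∀ x, (M x).PosSemidef) (hsum : ∑ x, M x = 1)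
    (betaHat : Ω → q → ℝ) (beta : q → ℝ)
    (hmean : ∀ s, beta s = ∑ x, betaHat x s * (ρ * M x).trace.re)
    (X : q → Matrix n n ℂ)
    (hX : ∀ s, X s = ∑ x, ((betaHat x s - beta s : ℝ) : ℂ) • M x)
    (Sig : Matrix q q ℝ)
    (hSig : ∀ s t, Sig s t = ∑ x, (betaHat x s - beta s) * (betaHat x t - beta t)
        * (ρ * M x).trace.re)
    (V : Matrix q q ℝ)
    (hV : ∀ s t, V s t = ((ρ * ((X s * X t + X t * X s) : Matrix n n ℂ)).trace.re) / 2) :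
    (Sig - V).PosSemidef :=
  error_matrix_ge_sym_covariance_general ρ hρ M hpos hsum betaHat beta X hX Sig hSig V hV
end

section
/- With the same setup (density matrix ρ, POVM M, estimator β̌, influence operators X_s), defining the complex covariance Z(X)_{st} = tr(ρ X_s X_t), the error matrix satisfies Σ ⪰ Z(X) in the sense that Σ − Z(X) is Hermitian positive semidefinite (Σ viewed as a complex matrix). -/
/-!
Put `Y x s = (β̌_s(x) - β_s) • 1 - X s`; these are Hermitian. Because `∑ x, M x = 1`, the cross
terms collapse and `∑ x, Y x s * M x * Y x t = ∑ x, (β̌_s(x) - β_s) (β̌_t(x) - β_t) • M x - X s * X t`.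
Taking `tr (ρ * ·)` exhibits `Σ - Z(X)` as `∑ x, [tr (ρ * (Y x s)ᴴ * M x * Y x t)]_{s t}`, a sum of
Gram matrices of the positive semidefinite sesquilinear forms `(A, B) ↦ tr (ρ * Aᴴ * M x * B)`.
-/

open Matrix ComplexOrder

namespace Matrix

variable {n Ω q 𝕜 : Type*} [Fintype n] [Fintype Ω] [RCLike 𝕜]

lemma PosSemidef.trace_mul_nonneg_s10 [DecidableEq n] {A B : Matrix n n 𝕜} (hA : A.PosSemidef)
    (hB : B.PosSemidef) : 0 ≤ (A * B).trace := by
  obtain ⟨C, rfl⟩ : ∃ C : Matrix n n 𝕜, A = star C * C := by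
    open scoped MatrixOrder in
    exact CStarAlgebra.nonneg_iff_eq_star_mul_self.mp hA.nonneg
  rw [Matrix.mul_assoc, trace_mul_comm]
  exact (hB.mul_mul_conjTranspose_same C).trace_nonneg

omit [Fintype n] in
lemma isHermitian_sum_ofReal_smul {M : Ω → Matrix n n 𝕜} (hM : ∀ x, (M x).IsHermitian)
    (r : Ω → ℝ) : (∑ x, (r x : 𝕜) • M x).IsHermitian := by
  simp only [IsHermitian, conjTranspose_sum, conjTranspose_smul, (hM _).eq, RCLike.star_def,
    RCLike.conj_ofReal]

lemma sum_smul_one_sub_mul_mul_smul_one_sub {R : Type*} [CommRing R] [DecidableEq n]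
    {M : Ω → Matrix n n R} (hM : ∑ x, M x = 1) {a b : Ω → R} {A B : Matrix n n R}
    (hA : A = ∑ x, a x • M x) (hB : B = ∑ x, b x • M x) :
    ∑ x, (a x • 1 - A) * M x * (b x • 1 - B) = ∑ x, (a x * b x) • M x - A * B := by
  have expand : ∀ x, (a x • 1 - A) * M x * (b x • 1 - B) =
      (a x * b x) • M x - (a x • M x) * B - A * (b x • M x) + A * M x * B := fun x => by
    simp only [Matrix.sub_mul, Matrix.mul_sub, smul_mul_assoc, mul_smul_comm, Matrix.one_mul,
      Matrix.mul_one, smul_sub, smul_smul, mul_comm (b x)]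
    abel
  rw [Finset.sum_congr rfl fun x _ => expand x, Finset.sum_add_distrib, Finset.sum_sub_distrib,
    Finset.sum_sub_distrib, ← Finset.sum_mul, ← Finset.mul_sum, ← Finset.sum_mul, ← Finset.mul_sum,
    hM, Matrix.mul_one, ← hA, ← hB]
  abel

variable [Fintype q]

lemma posSemidef_trace_mul_conjTranspose_mul_mul [DecidableEq n] {ρ M : Matrix n n 𝕜}
    (hρ : ρ.PosSemidef) (hM : M.PosSemidef) (Y : q → Matrix n n 𝕜) :
    (of fun s t => (ρ * ((Y s)ᴴ * M * Y t)).trace).PosSemidef := by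
  refine .of_dotProduct_mulVec_nonneg ?_ fun v => ?_
  · ext s t
    simp only [conjTranspose_apply, of_apply, ← trace_conjTranspose, conjTranspose_mul,
      conjTranspose_conjTranspose, hρ.1.eq, hM.1.eq, Matrix.mul_assoc]
    rw [trace_mul_comm ρ, Matrix.mul_assoc, Matrix.mul_assoc]
  · set B := ∑ t, v t • Y t
    have hquad : star v ⬝ᵥ (of fun s t => (ρ * ((Y s)ᴴ * M * Y t)).trace) *ᵥ v =
        (ρ * (Bᴴ * M * B)).trace := by
      simp only [B, dotProduct, mulVec, of_apply, conjTranspose_sum, conjTranspose_smul,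
        Finset.sum_mul, Finset.mul_sum, smul_mul_assoc, mul_smul_comm, trace_sum, trace_smul,
        smul_eq_mul, Pi.star_apply]
      rw [Finset.sum_comm]
      exact Finset.sum_congr rfl fun _ _ => Finset.sum_congr rfl fun _ _ => by ring
    exact hquad ▸ hρ.trace_mul_nonneg_s10 (hM.conjTranspose_mul_mul_same B)

end Matrix

theorem error_matrix_ge_complex_covariance_general {Ω n q : Type*}
    [Fintype Ω] [Fintype n] [DecidableEq n] [Fintype q]
    (ρ : Matrix n n ℂ) (hρ : ρ.PosSemidef)
    (M : Ω → Matrix n n ℂ) (hpos : ∀ x, (M x).PosSemidef) (hsum : ∑ x, M x = 1)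
    (betaHat : Ω → q → ℝ) (beta : q → ℝ)
    (X : q → Matrix n n ℂ)
    (hX : ∀ s, X s = ∑ x, ((betaHat x s - beta s : ℝ) : ℂ) • M x)
    (Sig : Matrix q q ℝ)
    (hSig : ∀ s t, Sig s t = ∑ x, (betaHat x s - beta s) * (betaHat x t - beta t)
        * (ρ * M x).trace.re)
    (Z : Matrix q q ℂ)
    (hZ : ∀ s t, Z s t = (ρ * (X s * X t)).trace) :
    (Sig.map (Complex.ofReal) - Z).PosSemidef := by
  set Y : Ω → q → Matrix n n ℂ := fun x s => ((betaHat x s - beta s : ℝ) : ℂ) • 1 - X s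
  have hXherm : ∀ s, (X s).IsHermitian := fun s =>
    hX s ▸ isHermitian_sum_ofReal_smul (fun x => (hpos x).1) _
  have hY : ∀ x s, (Y x s)ᴴ = Y x s := fun x s => by
    simp [Y, conjTranspose_sub, (hXherm s).eq, Complex.conj_ofReal]
  have htrace_real : ∀ x, (((ρ * M x).trace.re : ℝ) : ℂ) = (ρ * M x).trace := fun x =>
    (Complex.eq_re_of_ofReal_le (hρ.trace_mul_nonneg_s10 (hpos x))).symm
  have hdecomp : Sig.map Complex.ofReal - Z =
      ∑ x, of fun s t => (ρ * ((Y x s)ᴴ * M x * Y x t)).trace := by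
    ext s t
    rw [Matrix.sub_apply, map_apply, Matrix.sum_apply]
    simp only [of_apply, hY]
    rw [← trace_sum, ← Matrix.mul_sum, sum_smul_one_sub_mul_mul_smul_one_sub hsum (hX s) (hX t),
      Matrix.mul_sub, trace_sub, ← hZ, Matrix.mul_sum, trace_sum, hSig]
    simp [trace_smul, htrace_real]
  rw [hdecomp]
  exact posSemidef_sum _ fun x _ => posSemidef_trace_mul_conjTranspose_mul_mul hρ (hpos x) (Y x)

/-- Holevo's matrix CRB with the complex covariance: `Sig ⪰ Z(X)` as Hermitian
matrices, where `Z(X)_{st} = tr(ρ X_s X_t)`. -/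
theorem error_matrix_ge_complex_covariance {Ω n q : Type*}
    [Fintype Ω] [Fintype n] [DecidableEq n] [Fintype q] [DecidableEq q]
    (ρ : Matrix n n ℂ) (hρ : ρ.PosSemidef) (hρtr : ρ.trace = 1)
    (M : Ω → Matrix n n ℂ) (hpos : ∀ x, (M x).PosSemidef) (hsum : ∑ x, M x = 1)
    (betaHat : Ω → q → ℝ) (beta : q → ℝ)
    (hmean : ∀ s, beta s = ∑ x, betaHat x s * (ρ * M x).trace.re)
    (X : q → Matrix n n ℂ)
    (hX : ∀ s, X s = ∑ x, ((betaHat x s - beta s : ℝ) : ℂ) • M x)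
    (Sig : Matrix q q ℝ)
    (hSig : ∀ s t, Sig s t = ∑ x, (betaHat x s - beta s) * (betaHat x t - beta t)
        * (ρ * M x).trace.re)
    (Z : Matrix q q ℂ)
    (hZ : ∀ s t, Z s t = (ρ * (X s * X t)).trace) :
    (Sig.map (Complex.ofReal) - Z).PosSemidef :=
  error_matrix_ge_complex_covariance_general ρ hρ M hpos hsum betaHat beta X hX Sig hSig Z hZ
end

section
/- Let J be a real symmetric PSD p×p matrix, B a real p×q matrix with J J⁺ B = B, and W a real symmetric positive definite q×q matrix. Then the minimum of tr(W Cᵀ J C) over real p×q matrices C satisfying J C = B equals tr(W Bᵀ J⁺ B), and it is attained at C = J⁺ B. -/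
open Matrix

/-- `Jp` is the Moore–Penrose pseudoinverse of `J` (the four Penrose conditions). -/
def IsMoorePenrose {p : Type*} [Fintype p] [DecidableEq p] (J Jp : Matrix p p ℝ) : Prop :=
  J * Jp * J = J ∧ Jp * J * Jp = Jp ∧ (J * Jp)ᵀ = J * Jp ∧ (Jp * J)ᵀ = Jp * J

lemma trace_transpose_mul_self_nonneg {m n : Type*} [Fintype m] [Fintype n]
    (A : Matrix m n ℝ) : 0 ≤ Matrix.trace (Aᵀ * A) := by
  rw [Matrix.trace]
  refine Finset.sum_nonneg fun j _ => ?_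
  simp only [Matrix.diag_apply, Matrix.mul_apply, Matrix.transpose_apply]
  exact Finset.sum_nonneg fun i _ => mul_self_nonneg _

lemma trace_mul_nonneg_of_posSemidef {n : Type*} [Fintype n] [DecidableEq n]
    {A B : Matrix n n ℝ} (hA : A.PosSemidef) (hB : B.PosSemidef) :
    0 ≤ Matrix.trace (A * B) := by
  obtain ⟨U, rfl⟩ : ∃ U : Matrix n n ℝ, A = Uᴴ * U := by
    open scoped MatrixOrder in exact CStarAlgebra.nonneg_iff_eq_star_mul_self.mp hA.nonneg
  obtain ⟨V, rfl⟩ : ∃ V : Matrix n n ℝ, B = Vᴴ * V := by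
    open scoped MatrixOrder in exact CStarAlgebra.nonneg_iff_eq_star_mul_self.mp hB.nonneg
  rw [Matrix.conjTranspose_eq_transpose_of_trivial, Matrix.conjTranspose_eq_transpose_of_trivial]
  have : Uᵀ * U * (Vᵀ * V) = Uᵀ * (U * Vᵀ * V) := by
    simp only [Matrix.mul_assoc]
  rw [this, Matrix.trace_mul_comm, Matrix.mul_assoc, ← Matrix.trace_mul_comm,
    show V * Uᵀ * (U * Vᵀ) = (U * Vᵀ)ᵀ * (U * Vᵀ) by
      rw [Matrix.transpose_mul, Matrix.transpose_transpose]]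
  exact trace_transpose_mul_self_nonneg _

/-- Finite-dimensional core of the generalized Helstrom CRB: for `J ⪰ 0`,
`B` with columns in the range of `J`, and `W ≻ 0`, the minimum of
`tr(W Cᵀ J C)` over `C` with `J C = B` is `tr(W Bᵀ J⁺ B)`, attained at `C = J⁺ B`. -/
theorem generalized_helstrom_minimum {p q : Type*}
    [Fintype p] [DecidableEq p] [Fintype q] [DecidableEq q]
    (J Jp : Matrix p p ℝ) (hJ : J.PosSemidef) (hJp : IsMoorePenrose J Jp)
    (B : Matrix p q ℝ) (hB : J * Jp * B = B)
    (W : Matrix q q ℝ) (hW : W.PosDef) :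
    (∀ C : Matrix p q ℝ, J * C = B →
        Matrix.trace (W * Bᵀ * Jp * B) ≤ Matrix.trace (W * Cᵀ * J * C)) ∧
    J * (Jp * B) = B ∧
    Matrix.trace (W * (Jp * B)ᵀ * J * (Jp * B)) = Matrix.trace (W * Bᵀ * Jp * B) := by
  have hJsym : Jᵀ = J := hJ.isHermitian.eq
  have hJpJ : Jpᵀ * J = J * Jp := by
    calc Jpᵀ * J = Jpᵀ * Jᵀ := by rw [hJsym]
    _ = (J * Jp)ᵀ := by rw [Matrix.transpose_mul]
    _ = J * Jp := hJp.2.2.1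
  have h1 : Bᵀ * (J * Jp) = Bᵀ := by
    have := congrArg Matrix.transpose hB
    rwa [Matrix.transpose_mul, hJp.2.2.1] at this
  -- key eq in right-associated form
  have hkey : (Jp * B)ᵀ * (J * (Jp * B)) = Bᵀ * (Jp * B) := by
    calc (Jp * B)ᵀ * (J * (Jp * B)) = Bᵀ * (Jpᵀ * (J * (Jp * B))) := by
          rw [Matrix.transpose_mul, Matrix.mul_assoc]
    _ = Bᵀ * (Jpᵀ * J * (Jp * B)) := by rw [Matrix.mul_assoc]
    _ = Bᵀ * (J * Jp * (Jp * B)) := by rw [hJpJ]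
    _ = Bᵀ * (J * Jp) * (Jp * B) := by simp only [Matrix.mul_assoc]
    _ = Bᵀ * (Jp * B) := by rw [h1]
  refine ⟨?_, by rw [← Matrix.mul_assoc]; exact hB, ?_⟩
  · intro C hC
    set D := C - Jp * B with hD
    have hJD : J * D = 0 := by
      simp [hD, Matrix.mul_sub, hC, ← Matrix.mul_assoc, hB, sub_self]
    have hDJ : Dᵀ * J = 0 := by
      have : (J * D)ᵀ = 0 := by rw [hJD]; simp
      rwa [Matrix.transpose_mul, hJsym] at this
    have hC' : C = Jp * B + D := by simp [hD]
    have hexp : Cᵀ * (J * C) = Bᵀ * (Jp * B) + Dᵀ * (J * D) := by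
      rw [hC', Matrix.transpose_add, Matrix.mul_add, Matrix.add_mul, Matrix.mul_add,
        Matrix.mul_add]
      have h2 : (Jp * B)ᵀ * (J * D) = 0 := by rw [hJD, Matrix.mul_zero]
      have h3 : Dᵀ * (J * (Jp * B)) = 0 := by
        rw [← Matrix.mul_assoc, hDJ, Matrix.zero_mul]
      rw [hkey, h2, h3]
      abel
    have hpsd : (Dᵀ * (J * D)).PosSemidef := by
      have := hJ.conjTranspose_mul_mul_same D
      rwa [Matrix.conjTranspose_eq_transpose_of_trivial, Matrix.mul_assoc] at this
    have hnn : 0 ≤ Matrix.trace (W * (Dᵀ * (J * D))) :=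
      trace_mul_nonneg_of_posSemidef hW.posSemidef hpsd
    have htr : Matrix.trace (W * Cᵀ * J * C)
        = Matrix.trace (W * Bᵀ * Jp * B) + Matrix.trace (W * (Dᵀ * (J * D))) := by
      simp only [Matrix.mul_assoc]
      rw [hexp, Matrix.mul_add, Matrix.trace_add]
    linarith
  · simp only [Matrix.mul_assoc]
    rw [hkey]
end
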